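/- Let N be a natural number and set τ3 = −2N − 2 − α − β in the degenerate first-order operator M. Then M maps the space of polynomials of degree at most N into itself: for every p ∈ ℝ[x] with deg p ≤ N one has deg(M p) ≤ N. -/
import Mathlib


open Polynomial

/-- The degenerate (τ1 = 1, τ2 = -1) tridiagonalized operator, a first-order
differential operator: `(M p)(x) = 2x(x-1)p'(x) + ((α+β+τ3+2)x + τ0 - α - 1)p(x)`. -/
noncomputable def Mdeg (α β τ0 τ3 : ℝ) (p : ℝ[X]) : ℝ[X] :=
  C 2 * (X * (X - 1)) * derivative p + (C (α + β + τ3 + 2) * X + C (τ0 - α - 1)) * p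

lemma coeff_X_mul_deriv (p : ℝ[X]) (k : ℕ) :
    (X * derivative p).coeff k = (k : ℝ) * p.coeff k := by
  cases k with
  | zero => simp
  | succ n =>
    rw [coeff_X_mul, coeff_derivative]
    push_cast
    ring

/-- With `τ3 = -2N-2-α-β`, the degenerate operator `M` preserves the space of
polynomials of degree at most `N`. -/
theorem Mdeg_preserves_degree (α β τ0 : ℝ) (N : ℕ) :
    ∀ p : ℝ[X], p.degree ≤ (N : WithBot ℕ) →
      (Mdeg α β τ0 (-2 * (N : ℝ) - 2 - α - β) p).degree ≤ (N : WithBot ℕ) := by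
  intro p hp
  rw [degree_le_iff_coeff_zero] at hp ⊢
  intro m hm
  have hmN : N < m := by exact_mod_cast hm
  obtain ⟨n, rfl⟩ : ∃ n, m = n + 1 := ⟨m - 1, by omega⟩
  have hn : N ≤ n := by omega
  have hp1 : p.coeff (n + 1) = 0 := hp (n + 1) (by exact_mod_cast hmN)
  have hc : α + β + (-2 * (N : ℝ) - 2 - α - β) + 2 = -2 * (N : ℝ) := by ring
  have key : Mdeg α β τ0 (-2 * (N : ℝ) - 2 - α - β) p
      = C 2 * (X * (X * derivative p)) - C 2 * (X * derivative p)
        + C (-2 * (N : ℝ)) * (X * p) + C (τ0 - α - 1) * p := by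
    unfold Mdeg
    rw [hc]
    ring
  rw [key]
  simp only [coeff_add, coeff_sub, coeff_C_mul, coeff_X_mul, coeff_X_mul_deriv, coeff_derivative,
    hp1, mul_zero, zero_mul, sub_zero, add_zero]
  rcases eq_or_lt_of_le hn with h | h
  · subst h
    ring
  · have hpn : p.coeff n = 0 := hp n (by exact_mod_cast h)
    simp [hpn]
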